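/- Let P ⊆ ℝ² be finite with |P| ≥ 2, let T be a Euclidean minimum spanning tree of P, let {p,q} be an edge of T, and let l ∈ {0,…,5} be such that q ∈ W_l(p). Then ‖p − q‖ = min_{r ∈ V_l(p)} ‖p − r‖; that is, q is a nearest point to p among the points of P lying in the wedge W_l(p). -/

import Mathlib

/-! The proof combines the cut property of minimum spanning trees with one planar fact:
if `a` and `b` lie in a common wedge of angle `π/3` at the origin and `‖a‖ < ‖b‖`, then
`‖b - a‖ < ‖b‖`, because the angle between them is less than `π/3`.

Suppose `r ∈ V_l(p)` were strictly closer to `p` than `q`. Then `‖q - r‖ < ‖p - q‖` too.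
Deleting the tree edge `pq` splits `T` into the part containing `p` and the part containing `q`.
If `r` lies with `p`, replacing `pq` by `rq` gives a lighter spanning tree; if `r` lies with `q`,
replacing `pq` by `pr` does. -/

open Real EuclideanGeometry
open scoped RealInnerProductSpace

noncomputable section

abbrev E : Type := EuclideanSpace ℝ (Fin 2)

/-- The point `(a, b)` in the Euclidean plane. -/
def pt (a b : ℝ) : E := (WithLp.equiv 2 (Fin 2 → ℝ)).symm ![a, b]

/-- The unit vector at polar angle `θ`. -/
def dir (θ : ℝ) : E := pt (Real.cos θ) (Real.sin θ)

/-- The lower boundary angle `(2l-1)π/6` of the `l`-th wedge. -/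
def lo (l : Fin 6) : ℝ := (2 * ((l : ℕ) : ℝ) - 1) * π / 6

/-- The upper boundary angle `(2l+1)π/6` of the `l`-th wedge. -/
def hi (l : Fin 6) : ℝ := (2 * ((l : ℕ) : ℝ) + 1) * π / 6

/-- The half-open wedge `W_l`: all nonzero points whose polar angle (mod `2π`)
lies in `[(2l-1)π/6, (2l+1)π/6)`. -/
def wedge (l : Fin 6) : Set E :=
  {x | x ≠ 0 ∧ ∃ θ : ℝ, lo l ≤ θ ∧ θ < hi l ∧ x = ‖x‖ • dir θ}

/-- `W_l(p)`, the translate of `W_l` with apex `p`. -/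
def wedgeAt (l : Fin 6) (p : E) : Set E := {x | x - p ∈ wedge l}

/-- The unit bisector vector `b_l = (cos(lπ/3), sin(lπ/3))` of `W_l`. -/
def bvec (l : Fin 6) : E := dir (((l : ℕ) : ℝ) * π / 3)

/-- `V_l(p) = P ∩ W_l(p)`. -/
def Vl (P : Finset E) (l : Fin 6) (p : E) : Set E := {x | x ∈ P ∧ x ∈ wedgeAt l p}

/-- The closed equilateral triangle `∆_l` with vertices `0`, `dir ((2l-1)π/6)`,
`dir ((2l+1)π/6)`. -/
def tri (l : Fin 6) : Set E := convexHull ℝ {0, dir (lo l), dir (hi l)}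

/-- The vertex set of `∆_l`. -/
def triVerts (l : Fin 6) : Set E := {0, dir (lo l), dir (hi l)}

/-- The `l`-tri `c + lam • ∆_l`. -/
def lTri (l : Fin 6) (c : E) (lam : ℝ) : Set E := (fun x => c + lam • x) '' tri l

/-- The closed circular sector (piece of pie) `σ_l` of the unit disk. -/
def sector (l : Fin 6) : Set E :=
  {x | ‖x‖ ≤ 1 ∧ (x = 0 ∨ ∃ θ : ℝ, lo l ≤ θ ∧ θ ≤ hi l ∧ x = ‖x‖ • dir θ)}

/-- The `l`-pie `c + lam • σ_l`. -/
def lPie (l : Fin 6) (c : E) (lam : ℝ) : Set E := (fun x => c + lam • x) '' sector l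

/-- Directed Semi-Yao graph edge from `a` to `b`: `a ∈ V_l(b)` for some `l` and `a`
has the minimum `b_l`-coordinate among the points of `V_l(b)`. -/
def SYG (P : Finset E) (a b : E) : Prop :=
  b ∈ P ∧ ∃ l : Fin 6, a ∈ Vl P l b ∧
    ∀ r ∈ Vl P l b, ⟪a - b, bvec l⟫ ≤ ⟪r - b, bvec l⟫

/-- Undirected Semi-Yao graph edge. -/
def SYGu (P : Finset E) (p q : E) : Prop := SYG P p q ∨ SYG P q p

/-- Directed nearest-neighbor graph edge from `a` to `b`: `b ∈ P \ {a}` and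
`‖a - b‖ = min_{r ∈ P \ {a}} ‖a - r‖`. -/
def NNG (P : Finset E) (a b : E) : Prop :=
  a ∈ P ∧ b ∈ P ∧ b ≠ a ∧ ∀ r ∈ P, r ≠ a → ‖a - b‖ ≤ ‖a - r‖

/-- Edge of the Equilateral Delaunay triangulation `EDT_l(P)`: there is an `l`-tri,
empty with respect to `P`, with both endpoints on its boundary. -/
def EDT (P : Finset E) (l : Fin 6) (p q : E) : Prop :=
  p ∈ P ∧ q ∈ P ∧ p ≠ q ∧ ∃ c : E, ∃ lam : ℝ, 0 < lam ∧
    p ∈ frontier (lTri l c lam) ∧ q ∈ frontier (lTri l c lam) ∧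
    ∀ r ∈ P, r ∉ interior (lTri l c lam)

/-- Edge of the Equilateral Delaunay graph `EDG(P) = EDT_0(P) ∪ EDT_1(P)`. -/
def EDG (P : Finset E) (p q : E) : Prop := EDT P 0 p q ∨ EDT P 1 p q

/-- Directed Yao-graph edge from `p` to `q`: `q ∈ V_l(p)` for some `l` and
`‖p - q‖ = min_{r ∈ V_l(p)} ‖p - r‖`. -/
def YG (P : Finset E) (p q : E) : Prop :=
  p ∈ P ∧ ∃ l : Fin 6, q ∈ Vl P l p ∧ ∀ r ∈ Vl P l p, ‖p - q‖ ≤ ‖p - r‖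

/-- Edge of the Pie Delaunay triangulation `PDT_l(P)`: there is an `l`-pie, empty
with respect to `P`, with both endpoints on its boundary. -/
def PDT (P : Finset E) (l : Fin 6) (p q : E) : Prop :=
  p ∈ P ∧ q ∈ P ∧ p ≠ q ∧ ∃ c : E, ∃ lam : ℝ, 0 < lam ∧
    p ∈ frontier (lPie l c lam) ∧ q ∈ frontier (lPie l c lam) ∧
    ∀ r ∈ P, r ∉ interior (lPie l c lam)

/-- Edge of the Pie Delaunay graph `PDG(P) = PDT_0(P) ∪ ⋯ ∪ PDT_5(P)`. -/
def PDG (P : Finset E) (p q : E) : Prop := ∃ l : Fin 6, PDT P l p q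

/-- Total Euclidean edge weight of a graph on the points of `P`. -/
def edgeWeight (P : Finset E) (G : SimpleGraph {x // x ∈ P}) : ℝ :=
  ∑ e ∈ G.edgeSet.toFinite.toFinset,
    Sym2.lift ⟨fun (a b : {x // x ∈ P}) => ‖(a : E) - (b : E)‖,
      fun _ _ => norm_sub_rev _ _⟩ e

/-- `T` is a Euclidean minimum spanning tree of `P`: a spanning tree (connected and
acyclic graph on the vertex set `P`) of minimum total Euclidean edge weight. -/
def IsEMST (P : Finset E) (T : SimpleGraph {x // x ∈ P}) : Prop :=
  T.IsTree ∧ ∀ G : SimpleGraph {x // x ∈ P}, G.IsTree → edgeWeight P T ≤ edgeWeight P G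


namespace SimpleGraph

variable {V : Type*}

theorem Reachable.reachable_deleteEdges_or {G : SimpleGraph V} {x u : V} (v : V)
    (h : G.Reachable x u) :
    (G.deleteEdges {s(u, v)}).Reachable x u ∨ (G.deleteEdges {s(u, v)}).Reachable x v := by
  obtain ⟨w⟩ := h
  induction w with
  | nil => exact .inl .rfl
  | @cons x y u hxy _ ih =>
    by_cases he : s(x, y) = s(u, v)
    · rcases Sym2.eq_iff.mp he with ⟨rfl, -⟩ | ⟨rfl, -⟩
      · exact .inl .rfl
      · exact .inr .rfl
    · have hadj : (G.deleteEdges {s(u, v)}).Adj x y := by simp [hxy, he]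
      exact ih.imp hadj.reachable.trans hadj.reachable.trans

variable [Finite V] {M : Type*} [AddCommMonoid M]

def totalWeight (w : Sym2 V → M) (G : SimpleGraph V) : M :=
  ∑ e ∈ G.edgeSet.toFinite.toFinset, w e

def IsMinSpanningTree [PartialOrder M] (w : Sym2 V → M) (T : SimpleGraph V) : Prop :=
  T.IsTree ∧ ∀ G : SimpleGraph V, G.IsTree → totalWeight w T ≤ totalWeight w G

theorem totalWeight_of_edgeSet_eq_insert (w : Sym2 V → M) {G H : SimpleGraph V} {e : Sym2 V}
    (he : e ∉ G.edgeSet) (hH : H.edgeSet = insert e G.edgeSet) :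
    totalWeight w H = w e + totalWeight w G := by
  classical
  simp only [totalWeight, hH, Set.Finite.toFinset_insert]
  exact Finset.sum_insert (by simpa using he)

theorem IsMinSpanningTree.le_of_reachable_deleteEdges [PartialOrder M]
    [IsOrderedCancelAddMonoid M] {w : Sym2 V → M} {T : SimpleGraph V}
    (hT : IsMinSpanningTree w T) {p q a b : V} (hpq : T.Adj p q)
    (ha : (T.deleteEdges {s(p, q)}).Reachable a p)
    (hb : (T.deleteEdges {s(p, q)}).Reachable b q) : w s(p, q) ≤ w s(a, b) := by
  set T' := T.deleteEdges {s(p, q)}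
  have hpq' : ¬ T'.Reachable p q := isAcyclic_iff_forall_adj_isBridge.mp hT.1.2 hpq
  have hab : ¬ T'.Reachable a b := fun h ↦ hpq' (ha.symm.trans (h.trans hb))
  have hne : a ≠ b := by rintro rfl; exact hab .rfl
  set G := T' ⊔ edge a b
  have hG : G.IsTree := by
    have hba : G.Adj b a := by simp [G, edge_adj, hne.symm]
    have : Nonempty V := ⟨p⟩
    have hp : ∀ x, G.Reachable x p := fun x ↦
      match (hT.1.preconnected x p).reachable_deleteEdges_or q with
      | .inl h => h.mono le_sup_left
      | .inr h => ((h.trans hb.symm).mono le_sup_left).trans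
          (hba.reachable.trans (ha.mono le_sup_left))
    refine ⟨⟨fun x y ↦ (hp x).trans (hp y).symm⟩, ?_⟩
    exact (hT.1.2.anti (deleteEdges_le _)).sup_edge_of_not_reachable hab
  have hT_edges : T.edgeSet = insert s(p, q) T'.edgeSet := by
    rw [edgeSet_deleteEdges, Set.insert_sdiff_singleton,
      Set.insert_eq_of_mem (show s(p, q) ∈ T.edgeSet from hpq)]
  have hG_edges : G.edgeSet = insert s(a, b) T'.edgeSet := by
    rw [edgeSet_sup, edgeSet_edge_of_ne hne, Set.union_comm, Set.singleton_union]
  have hweight := hT.2 G hG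
  rw [totalWeight_of_edgeSet_eq_insert w (by simp [T']) hT_edges,
    totalWeight_of_edgeSet_eq_insert w (fun h ↦ hab (Adj.reachable h)) hG_edges] at hweight
  exact le_of_add_le_add_right hweight

end SimpleGraph

theorem InnerProductGeometry.norm_sub_lt_of_angle_lt_pi_div_three {F : Type*}
    [NormedAddCommGroup F] [InnerProductSpace ℝ F] {a b : F} (ha : a ≠ 0) (hab : ‖a‖ ≤ ‖b‖)
    (h : angle a b < π / 3) : ‖b - a‖ < ‖b‖ := by
  have hcos : 1 / 2 < Real.cos (angle a b) := by
    rw [← Real.cos_pi_div_three]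
    exact Real.cos_lt_cos_of_nonneg_of_le_pi (angle_nonneg a b) (by linarith [pi_pos]) h
  have hinner : ‖a‖ * ‖b‖ < 2 * ⟪a, b⟫ := by
    rw [← cos_angle_mul_norm_mul_norm]
    nlinarith [mul_pos (norm_pos_iff.mpr ha) ((norm_pos_iff.mpr ha).trans_le hab)]
  have hsq : ‖b - a‖ ^ 2 < ‖b‖ ^ 2 := by
    rw [norm_sub_sq_real, real_inner_comm]
    nlinarith [mul_le_mul_of_nonneg_left hab (norm_nonneg a)]
  exact lt_of_pow_lt_pow_left₀ 2 (norm_nonneg b) hsq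

theorem inner_dir_dir (θ₁ θ₂ : ℝ) : ⟪dir θ₁, dir θ₂⟫ = Real.cos (θ₁ - θ₂) := by
  simp only [dir, pt, PiLp.inner_apply, RCLike.inner_apply, conj_trivial,
    WithLp.equiv_symm_apply, Fin.sum_univ_two, Real.cos_sub, mul_comm,
    Matrix.cons_val_zero, Matrix.cons_val_one]

theorem norm_dir (θ : ℝ) : ‖dir θ‖ = 1 := by
  have h := inner_dir_dir θ θ
  rwa [sub_self, Real.cos_zero, real_inner_self_eq_norm_sq,
    pow_eq_one_iff_of_nonneg (norm_nonneg _) two_ne_zero] at h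

theorem angle_dir_dir {θ₁ θ₂ : ℝ} (h : |θ₁ - θ₂| ≤ π) :
    InnerProductGeometry.angle (dir θ₁) (dir θ₂) = |θ₁ - θ₂| := by
  rw [InnerProductGeometry.angle, inner_dir_dir, norm_dir, norm_dir, mul_one, div_one,
    ← Real.cos_abs, Real.arccos_cos (abs_nonneg _) h]

theorem angle_lt_pi_div_three_of_mem_wedge {l : Fin 6} {a b : E} (ha : a ∈ wedge l)
    (hb : b ∈ wedge l) : InnerProductGeometry.angle a b < π / 3 := by
  obtain ⟨ha0, θ₁, hlo₁, hhi₁, hae⟩ := ha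
  obtain ⟨hb0, θ₂, hlo₂, hhi₂, hbe⟩ := hb
  have hwidth : hi l - lo l = π / 3 := by unfold hi lo; ring
  have hθ : |θ₁ - θ₂| < π / 3 := abs_sub_lt_iff.mpr ⟨by linarith, by linarith⟩
  rw [hae, hbe, InnerProductGeometry.angle_smul_left_of_pos _ _ (norm_pos_iff.mpr ha0),
    InnerProductGeometry.angle_smul_right_of_pos _ _ (norm_pos_iff.mpr hb0),
    angle_dir_dir (by linarith [pi_pos])]
  exact hθ

theorem emst_edge_is_nearest_in_wedge_general (P : Finset E)
    (T : SimpleGraph {x // x ∈ P}) (hT : IsEMST P T)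
    (p q : {x // x ∈ P}) (hadj : T.Adj p q)
    (l : Fin 6) (hw : (q : E) ∈ wedgeAt l (p : E)) :
    ∀ r ∈ Vl P l (p : E), ‖(p : E) - (q : E)‖ ≤ ‖(p : E) - r‖ := by
  rintro r ⟨hrP, hr⟩
  by_contra! hpr
  have hmst : SimpleGraph.IsMinSpanningTree
      (Sym2.lift ⟨fun a b : {x // x ∈ P} ↦ ‖(a : E) - b‖, fun _ _ ↦ norm_sub_rev _ _⟩) T := hT
  have hrq : ‖r - q‖ < ‖(p : E) - q‖ := by
    have := InnerProductGeometry.norm_sub_lt_of_angle_lt_pi_div_three (b := (q : E) - p) hr.1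
      (by rw [norm_sub_rev, norm_sub_rev (q : E)]; exact hpr.le)
      (angle_lt_pi_div_three_of_mem_wedge hr hw)
    rwa [sub_sub_sub_cancel_right, norm_sub_rev, norm_sub_rev (q : E)] at this
  rcases (hmst.1.preconnected ⟨r, hrP⟩ p).reachable_deleteEdges_or q with hr_near_p | hr_near_q
  · exact (hmst.le_of_reachable_deleteEdges hadj hr_near_p .rfl).not_gt hrq
  · exact (hmst.le_of_reachable_deleteEdges hadj .rfl hr_near_q).not_gt hpr

/-- if `{p, q}` is an edge of a Euclidean minimum spanning tree of `P`
and `q ∈ W_l(p)`, then `q` is a nearest point to `p` among the points of `P` in `W_l(p)`. -/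
theorem emst_edge_is_nearest_in_wedge (P : Finset E) (hP : 2 ≤ P.card)
    (T : SimpleGraph {x // x ∈ P}) (hT : IsEMST P T)
    (p q : {x // x ∈ P}) (hadj : T.Adj p q)
    (l : Fin 6) (hw : (q : E) ∈ wedgeAt l (p : E)) :
    ∀ r ∈ Vl P l (p : E), ‖(p : E) - (q : E)‖ ≤ ‖(p : E) - r‖ :=
  emst_edge_is_nearest_in_wedge_general P T hT p q hadj l hw
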